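/- Let G be a finite simple graph with a bound assignment, and let ℛ = (l, r) and ℛ′ = (l′, r′) be two bounded proper interval representations of G with the same weak ordering of endpoints: for all vertices u, v, l(u) ≤ l(v) ⟺ l′(u) ≤ l′(v), r(u) ≤ r(v) ⟺ r′(u) ≤ r′(v), l(u) ≤ r(v) ⟺ l′(u) ≤ r′(v), and r(u) ≤ l(v) ⟺ r′(u) ≤ l′(v). Then the assignment l″(v) = min(l(v), l′(v)), r″(v) = min(r(v), r′(v)) is again a bounded proper interval representation of G. -/
import Mathlib


open Set


private lemma min_le_min_iff_aux {a b c d : ℝ} (h : a ≤ c ↔ b ≤ d) :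
    min a b ≤ min c d ↔ a ≤ c := by
  constructor
  · intro hm
    by_contra hac
    push_neg at hac
    have hbd : d < b := lt_of_not_ge (fun hb => (not_le.mpr hac) (h.mpr hb))
    exact absurd hm (not_le.mpr (lt_min ((min_le_left c d).trans_lt hac)
      ((min_le_right c d).trans_lt hbd)))
  · intro hac
    exact min_le_min hac (h.mp hac)

private lemma icc_inter_nonempty {a b c d : ℝ} (hab : a ≤ b) (hcd : c ≤ d) :
    (Icc a b ∩ Icc c d).Nonempty ↔ (a ≤ d ∧ c ≤ b) := by
  rw [Icc_inter_Icc, nonempty_Icc, max_le_iff, le_min_iff, le_min_iff]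
  constructor
  · rintro ⟨⟨_, h1⟩, h2, _⟩
    exact ⟨h1, h2⟩
  · rintro ⟨h1, h2⟩
    exact ⟨⟨hab, h1⟩, h2, hcd⟩

/-- The pointwise minimum of two bounded proper interval representations with
the same weak ordering of endpoints is again a bounded proper interval representation. -/
theorem min_of_bounded_proper_reps
    {V : Type*} [Fintype V] (G : SimpleGraph V)
    (Ll Lr Rl Rr : V → ℝ)
    (hL : ∀ v, Ll v ≤ Lr v) (hR : ∀ v, Rl v ≤ Rr v)
    (hLR₁ : ∀ v, Ll v ≤ Rl v) (hLR₂ : ∀ v, Lr v ≤ Rr v)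
    (l r l' r' : V → ℝ)
    (hlr : ∀ v, l v ≤ r v) (hlr' : ∀ v, l' v ≤ r' v)
    (hadj : ∀ u v, u ≠ v → (G.Adj u v ↔ (Icc (l u) (r u) ∩ Icc (l v) (r v)).Nonempty))
    (hadj' : ∀ u v, u ≠ v → (G.Adj u v ↔ (Icc (l' u) (r' u) ∩ Icc (l' v) (r' v)).Nonempty))
    (hproper : ∀ u v : V, ¬ Icc (l u) (r u) ⊂ Icc (l v) (r v))
    (hproper' : ∀ u v : V, ¬ Icc (l' u) (r' u) ⊂ Icc (l' v) (r' v))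
    (hbl : ∀ v, l v ∈ Icc (Ll v) (Lr v)) (hbr : ∀ v, r v ∈ Icc (Rl v) (Rr v))
    (hbl' : ∀ v, l' v ∈ Icc (Ll v) (Lr v)) (hbr' : ∀ v, r' v ∈ Icc (Rl v) (Rr v))
    -- the same weak ordering of endpoints:
    (hll : ∀ u v, l u ≤ l v ↔ l' u ≤ l' v)
    (hrr : ∀ u v, r u ≤ r v ↔ r' u ≤ r' v)
    (hlr2 : ∀ u v, l u ≤ r v ↔ l' u ≤ r' v)
    (hrl : ∀ u v, r u ≤ l v ↔ r' u ≤ l' v) :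
    (∀ v, min (l v) (l' v) ≤ min (r v) (r' v)) ∧
    (∀ u v, u ≠ v → (G.Adj u v ↔
      (Icc (min (l u) (l' u)) (min (r u) (r' u)) ∩
        Icc (min (l v) (l' v)) (min (r v) (r' v))).Nonempty)) ∧
    (∀ u v : V, ¬ Icc (min (l u) (l' u)) (min (r u) (r' u)) ⊂
      Icc (min (l v) (l' v)) (min (r v) (r' v))) ∧
    (∀ v, min (l v) (l' v) ∈ Icc (Ll v) (Lr v)) ∧
    (∀ v, min (r v) (r' v) ∈ Icc (Rl v) (Rr v)) := by

  have key : ∀ u v, (min (l u) (l' u) ≤ min (r v) (r' v) ↔ l u ≤ r v) :=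
    fun u v => min_le_min_iff_aux (hlr2 u v)
  have keyl : ∀ u v, (min (l u) (l' u) ≤ min (l v) (l' v) ↔ l u ≤ l v) :=
    fun u v => min_le_min_iff_aux (hll u v)
  have keyr : ∀ u v, (min (r u) (r' u) ≤ min (r v) (r' v) ↔ r u ≤ r v) :=
    fun u v => min_le_min_iff_aux (hrr u v)
  have hmin : ∀ v, min (l v) (l' v) ≤ min (r v) (r' v) :=
    fun v => min_le_min (hlr v) (hlr' v)
  refine ⟨hmin, ?_, ?_, ?_, ?_⟩
  · intro u v huv
    rw [hadj u v huv, icc_inter_nonempty (hlr u) (hlr v),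
      icc_inter_nonempty (hmin u) (hmin v), key u v, key v u]
  · intro u v h
    have hsub := h.subset
    have hm1 := hsub ⟨le_refl _, hmin u⟩
    have hm2 := hsub ⟨hmin u, le_refl _⟩
    have hl : l v ≤ l u := (keyl v u).mp hm1.1
    have hr : r u ≤ r v := (keyr u v).mp hm2.2
    by_cases heq : l u ≤ l v ∧ r v ≤ r u
    · have e1 : min (l u) (l' u) = min (l v) (l' v) :=
        le_antisymm ((keyl u v).mpr heq.1) hm1.1
      have e2 : min (r u) (r' u) = min (r v) (r' v) :=
        le_antisymm hm2.2 ((keyr v u).mpr heq.2)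
      exact h.2 (by rw [e1, e2])
    · push_neg at heq
      refine hproper u v ⟨Icc_subset_Icc hl hr, fun hsub2 => ?_⟩
      rcases lt_or_ge (l v) (l u) with hlt | hle
      · exact absurd (hsub2 ⟨le_refl _, hlr v⟩).1 (not_le.mpr hlt)
      · exact absurd (hsub2 ⟨hlr v, le_refl _⟩).2 (not_le.mpr (heq hle))
  · exact fun v => ⟨le_min (hbl v).1 (hbl' v).1, (min_le_left _ _).trans (hbl v).2⟩
  · exact fun v => ⟨le_min (hbr v).1 (hbr' v).1, (min_le_left _ _).trans (hbr v).2⟩
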